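/- For sequential Gibbs sampling on a distribution π with total influence α < 1 over n variables, there exists a coupling (X_t, Y_t) of the chains from any pair of initial states such that for every variable i and time t, P(X_{i,t} ≠ Y_{i,t}) ≤ exp(−(1−α)t/n). -/

import Mathlib

noncomputable def tvDist {Ω : Type*} [Fintype Ω] (μ ν : Ω → ℝ) : ℝ :=
  ⨆ A : Finset Ω, |∑ x ∈ A, μ x - ∑ x ∈ A, ν x|

def IsDist {Ω : Type*} [Fintype Ω] (μ : Ω → ℝ) : Prop :=
  (∀ x, 0 ≤ μ x) ∧ ∑ x, μ x = 1

noncomputable def condDist {I S : Type*} [Fintype I] [Fintype S] [DecidableEq I]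
    (π : (I → S) → ℝ) (i : I) (x : I → S) : S → ℝ :=
  fun s => π (Function.update x i s) / ∑ s' : S, π (Function.update x i s')

noncomputable def totalInfluence {I S : Type*} [Fintype I] [Fintype S] [DecidableEq I]
    (π : (I → S) → ℝ) : ℝ :=
  ⨆ i : I, ∑ j : I,
    ⨆ p : {p : (I → S) × (I → S) // ∀ k, k ≠ j → p.1 k = p.2 k},
      tvDist (condDist π i p.1.1) (condDist π i p.1.2)

/-- The transition kernel of sequential Gibbs sampling: pick a uniformly random
variable and resample it from its conditional distribution. -/
noncomputable def gibbsKernel {I S : Type*} [Fintype I] [Fintype S]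
    [DecidableEq I] [DecidableEq S] (π : (I → S) → ℝ) (x y : I → S) : ℝ :=
  (Fintype.card I : ℝ)⁻¹ *
    ∑ i : I, if ∀ j, j ≠ i → y j = x j then condDist π i x (y i) else 0

noncomputable def evolve {Ω : Type*} [Fintype Ω] (K : Ω → Ω → ℝ) (μ : Ω → ℝ) : Ω → ℝ :=
  fun y => ∑ x, μ x * K x y

def marg1 {Ω₁ Ω₂ : Type*} [Fintype Ω₂] (q : Ω₁ × Ω₂ → ℝ) : Ω₁ → ℝ := fun a => ∑ b, q (a, b)
def marg2 {Ω₁ Ω₂ : Type*} [Fintype Ω₁] (q : Ω₁ × Ω₂ → ℝ) : Ω₂ → ℝ := fun b => ∑ a, q (a, b)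

/-- A coupling of two copies of the Markov chain with kernel `K`, started at the
states `x0` and `y0`: a joint process whose marginals each evolve according to `K`. -/
def IsChainCoupling {Ω : Type*} [Fintype Ω] [DecidableEq Ω]
    (K : Ω → Ω → ℝ) (x0 y0 : Ω) (q : ℕ → Ω × Ω → ℝ) : Prop :=
  (∀ t z, 0 ≤ q t z) ∧ (∀ t, ∑ z, q t z = 1) ∧
  (q 0 = fun z => if z = (x0, y0) then 1 else 0) ∧
  (∀ t, marg1 (q (t + 1)) = evolve K (marg1 (q t))) ∧
  (∀ t, marg2 (q (t + 1)) = evolve K (marg2 (q t)))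

/-!
Run both chains with the same uniformly chosen site `k` and resample that site from the maximal
coupling of the two conditional laws. A disagreement at site `i` is untouched when `k ≠ i`; when
`k = i` the two new values differ with probability at most the total variation distance of the
conditional laws, which (changing the differing sites one at a time) is at most
`∑ j, influence π i j * [x j ≠ y j]`. Hence the disagreement probabilities satisfy
`p (t + 1) ≤ W p t` for the nonnegative matrix `W = (1 - 1/n) • 1 + (1/n) • influence π`, whose row
sums are at most `1 - (1 - α)/n`, so `p t i ≤ (1 - (1 - α)/n) ^ t ≤ exp (-(1 - α) t / n)`.
-/

open Finset Function

section TotalVariation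

variable {Ω : Type*} [Fintype Ω]

lemma abs_sum_sub_sum_le_tvDist (μ ν : Ω → ℝ) (A : Finset Ω) :
    |∑ x ∈ A, μ x - ∑ x ∈ A, ν x| ≤ tvDist μ ν :=
  le_ciSup (f := fun B : Finset Ω => |∑ x ∈ B, μ x - ∑ x ∈ B, ν x|)
    (Set.finite_range _).bddAbove A

lemma tvDist_nonneg (μ ν : Ω → ℝ) : 0 ≤ tvDist μ ν :=
  (abs_nonneg _).trans (abs_sum_sub_sum_le_tvDist μ ν ∅)

lemma tvDist_self (μ : Ω → ℝ) : tvDist μ μ = 0 :=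
  le_antisymm (ciSup_le fun A => by simp) (tvDist_nonneg μ μ)

lemma tvDist_triangle (μ ν ρ : Ω → ℝ) : tvDist μ ρ ≤ tvDist μ ν + tvDist ν ρ :=
  ciSup_le fun A => (abs_sub_le _ (∑ x ∈ A, ν x) _).trans <|
    add_le_add (abs_sum_sub_sum_le_tvDist _ _ A) (abs_sum_sub_sum_le_tvDist _ _ A)

end TotalVariation

section MaximalCoupling

variable {S : Type*} [Fintype S] {μ ν : S → ℝ}

noncomputable def excessMass (μ ν : S → ℝ) : ℝ := ∑ s, (μ s - min (μ s) (ν s))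

lemma excessMass_comm (h : ∑ s, μ s = ∑ s, ν s) : excessMass μ ν = excessMass ν μ := by
  simp only [excessMass, sum_sub_distrib, h, min_comm]

lemma sum_sub_min_right_eq_excessMass (h : ∑ s, μ s = ∑ s, ν s) :
    ∑ s, (ν s - min (μ s) (ν s)) = excessMass μ ν := by
  rw [excessMass_comm h]
  simp only [excessMass, min_comm]

lemma excessMass_nonneg : 0 ≤ excessMass μ ν :=
  sum_nonneg fun _ _ => sub_nonneg.2 (min_le_left _ _)

lemma sub_min_eq_zero_of_excessMass_eq_zero (h : excessMass μ ν = 0) (s : S) :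
    μ s - min (μ s) (ν s) = 0 :=
  (sum_eq_zero_iff_of_nonneg fun _ _ => sub_nonneg.2 (min_le_left _ _)).1 h s (mem_univ s)

lemma excessMass_le_tvDist : excessMass μ ν ≤ tvDist μ ν := by
  have h : excessMass μ ν = ∑ s ∈ univ.filter (fun s => ν s < μ s), (μ s - ν s) := by
    rw [sum_filter]
    refine sum_congr rfl fun s _ => ?_
    split_ifs with hs
    · rw [min_eq_right hs.le]
    · rw [min_eq_left (not_lt.1 hs), sub_self]
  rw [h, sum_sub_distrib]
  exact (le_abs_self _).trans (abs_sum_sub_sum_le_tvDist μ ν _)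

variable [DecidableEq S]

/-- The common mass `min μ ν` sits on the diagonal and the two excesses are coupled
independently. When `excessMass μ ν = 0` the second term is `_ / 0 = 0`, as it should be. -/
noncomputable def maximalCoupling (μ ν : S → ℝ) (p : S × S) : ℝ :=
  (if p.1 = p.2 then min (μ p.1) (ν p.1) else 0) +
    (μ p.1 - min (μ p.1) (ν p.1)) * (ν p.2 - min (μ p.2) (ν p.2)) / excessMass μ ν

lemma maximalCoupling_nonneg (hμ : ∀ s, 0 ≤ μ s) (hν : ∀ s, 0 ≤ ν s) (p : S × S) :
    0 ≤ maximalCoupling μ ν p := by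
  refine add_nonneg ?_ (div_nonneg (mul_nonneg (sub_nonneg.2 (min_le_left _ _))
    (sub_nonneg.2 (min_le_right _ _))) excessMass_nonneg)
  split_ifs
  exacts [le_min (hμ _) (hν _), le_rfl]

lemma maximalCoupling_swap (h : ∑ s, μ s = ∑ s, ν s) (p : S × S) :
    maximalCoupling ν μ p.swap = maximalCoupling μ ν p := by
  simp only [maximalCoupling, Prod.fst_swap, Prod.snd_swap, eq_comm (a := p.2), min_comm (ν _),
    excessMass_comm h]
  by_cases hp : p.1 = p.2 <;> simp only [hp, if_true, if_false] <;> ring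

lemma sum_maximalCoupling_snd (h : ∑ s, μ s = ∑ s, ν s) (s : S) :
    ∑ s', maximalCoupling μ ν (s, s') = μ s := by
  simp only [maximalCoupling, sum_add_distrib, sum_ite_eq, mem_univ, if_true, ← sum_div,
    ← mul_sum, sum_sub_min_right_eq_excessMass h]
  by_cases h0 : excessMass μ ν = 0
  · have := sub_min_eq_zero_of_excessMass_eq_zero h0 s
    simp only [h0, div_zero, add_zero]
    linarith
  · rw [mul_div_cancel_right₀ _ h0]; ring

lemma sum_maximalCoupling_fst (h : ∑ s, μ s = ∑ s, ν s) (s' : S) :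
    ∑ s, maximalCoupling μ ν (s, s') = ν s' := by
  rw [← sum_maximalCoupling_snd h.symm s']
  exact sum_congr rfl fun s _ => maximalCoupling_swap h.symm (s', s)

lemma sum_maximalCoupling (h : ∑ s, μ s = ∑ s, ν s) : ∑ p, maximalCoupling μ ν p = ∑ s, μ s := by
  rw [Fintype.sum_prod_type]
  exact sum_congr rfl fun s _ => sum_maximalCoupling_snd h s

lemma sum_maximalCoupling_offDiag_le (h : ∑ s, μ s = ∑ s, ν s) :
    ∑ p ∈ univ.filter (fun p : S × S => p.1 ≠ p.2), maximalCoupling μ ν p ≤ tvDist μ ν := by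
  set a := fun s => μ s - min (μ s) (ν s)
  set b := fun s => ν s - min (μ s) (ν s)
  calc ∑ p ∈ univ.filter (fun p : S × S => p.1 ≠ p.2), maximalCoupling μ ν p
      = ∑ p ∈ univ.filter (fun p : S × S => p.1 ≠ p.2), a p.1 * b p.2 / excessMass μ ν :=
        sum_congr rfl fun p hp => by simp [maximalCoupling, (mem_filter.1 hp).2, a, b]
    _ ≤ ∑ p : S × S, a p.1 * b p.2 / excessMass μ ν :=
        sum_le_sum_of_subset_of_nonneg (filter_subset _ _) fun p _ _ =>
          div_nonneg (mul_nonneg (sub_nonneg.2 (min_le_left _ _))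
            (sub_nonneg.2 (min_le_right _ _))) excessMass_nonneg
    _ = excessMass μ ν * excessMass μ ν / excessMass μ ν := by
        rw [← sum_div, Fintype.sum_prod_type, ← sum_mul_sum, sum_sub_min_right_eq_excessMass h]
        rfl
    _ = excessMass μ ν := mul_self_div_self _
    _ ≤ tvDist μ ν := excessMass_le_tvDist

end MaximalCoupling

section Configurations

variable {I S : Type*} [Fintype I] [DecidableEq I] [DecidableEq S]

lemma tvDist_le_sum_of_single_site {Ω : Type*} [Fintype Ω] (f : (I → S) → Ω → ℝ) (β : I → ℝ)
    (hβ : ∀ j (u v : I → S), (∀ k, k ≠ j → u k = v k) → tvDist (f u) (f v) ≤ β j)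
    (x y : I → S) :
    tvDist (f x) (f y) ≤ ∑ j ∈ univ.filter (fun j => x j ≠ y j), β j := by
  have hybrid : ∀ T : Finset I, tvDist (f x) (f (T.piecewise y x)) ≤ ∑ j ∈ T, β j := by
    intro T
    induction T using Finset.induction_on with
    | empty => simp [tvDist_self]
    | @insert a T ha ih =>
      rw [piecewise_insert, sum_insert ha, add_comm]
      exact (tvDist_triangle _ (f (T.piecewise y x)) _).trans <|
        add_le_add ih (hβ a _ _ fun k hk => (update_of_ne hk _ _).symm)
  convert hybrid (univ.filter fun j => x j ≠ y j)
  ext j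
  by_cases h : x j = y j <;> simp [h]

lemma ite_agreeOff_eq_sum_update [Fintype S] (g : S → ℝ) (k : I) (x x' : I → S) :
    (if ∀ j, j ≠ k → x' j = x j then g (x' k) else 0) =
      ∑ s, if update x k s = x' then g s else 0 := by
  simp only [update_eq_iff, ite_and, sum_ite_eq', mem_univ, if_true, @eq_comm _ (x _)]

end Configurations

section CoupledChain

variable {Ω : Type*} [Fintype Ω] {K : Ω → Ω → ℝ} {Q : Ω × Ω → Ω × Ω → ℝ}

lemma evolve_nonneg (hK : ∀ x y, 0 ≤ K x y) {μ : Ω → ℝ} (hμ : ∀ x, 0 ≤ μ x) (y : Ω) :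
    0 ≤ evolve K μ y :=
  sum_nonneg fun x _ => mul_nonneg (hμ x) (hK x y)

lemma sum_evolve (hK : ∀ x, ∑ y, K x y = 1) (μ : Ω → ℝ) : ∑ y, evolve K μ y = ∑ x, μ x := by
  simp only [evolve]
  rw [sum_comm]
  simp only [← mul_sum, hK, mul_one]

lemma sum_evolve_le {μ : Ω → ℝ} (hμ : ∀ x, 0 ≤ μ x) {s : Finset Ω} {g : Ω → ℝ}
    (hg : ∀ x, ∑ y ∈ s, K x y ≤ g x) : ∑ y ∈ s, evolve K μ y ≤ ∑ x, μ x * g x := by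
  simp only [evolve]
  rw [sum_comm]
  exact sum_le_sum fun x _ => by rw [← mul_sum]; exact mul_le_mul_of_nonneg_left (hg x) (hμ x)

lemma marg1_evolve (hQ : ∀ z x', ∑ y', Q z (x', y') = K z.1 x') (q : Ω × Ω → ℝ) :
    marg1 (evolve Q q) = evolve K (marg1 q) := by
  ext x'
  simp only [marg1, evolve]
  rw [sum_comm]
  simp only [← mul_sum, hQ, Fintype.sum_prod_type, sum_mul]

lemma marg2_evolve (hQ : ∀ z y', ∑ x', Q z (x', y') = K z.2 y') (q : Ω × Ω → ℝ) :
    marg2 (evolve Q q) = evolve K (marg2 q) := by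
  ext y'
  simp only [marg2, evolve]
  rw [sum_comm]
  simp only [← mul_sum, hQ, Fintype.sum_prod_type_right, sum_mul]

variable [DecidableEq Ω]

noncomputable def coupledChain (Q : Ω × Ω → Ω × Ω → ℝ) (z₀ : Ω × Ω) (t : ℕ) : Ω × Ω → ℝ :=
  (evolve Q)^[t] fun z => if z = z₀ then 1 else 0

lemma coupledChain_succ (z₀ : Ω × Ω) (t : ℕ) :
    coupledChain Q z₀ (t + 1) = evolve Q (coupledChain Q z₀ t) :=
  iterate_succ_apply' _ _ _

lemma coupledChain_nonneg (hQ : ∀ z z', 0 ≤ Q z z') (z₀ : Ω × Ω) (t : ℕ) (z : Ω × Ω) :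
    0 ≤ coupledChain Q z₀ t z := by
  induction t generalizing z with
  | zero => simp only [coupledChain, iterate_zero, id]; split_ifs <;> norm_num
  | succ t ih => rw [coupledChain_succ]; exact evolve_nonneg hQ ih z

lemma sum_coupledChain (hQ : ∀ z, ∑ z', Q z z' = 1) (z₀ : Ω × Ω) (t : ℕ) :
    ∑ z, coupledChain Q z₀ t z = 1 := by
  induction t with
  | zero => simp [coupledChain]
  | succ t ih => rw [coupledChain_succ, sum_evolve hQ, ih]

lemma isChainCoupling_coupledChain (hQ₀ : ∀ z z', 0 ≤ Q z z') (hQ₁ : ∀ z, ∑ z', Q z z' = 1)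
    (hfst : ∀ z x', ∑ y', Q z (x', y') = K z.1 x') (hsnd : ∀ z y', ∑ x', Q z (x', y') = K z.2 y')
    (x₀ y₀ : Ω) : IsChainCoupling K x₀ y₀ (coupledChain Q (x₀, y₀)) :=
  ⟨coupledChain_nonneg hQ₀ _, sum_coupledChain hQ₁ _, rfl,
    fun t => by rw [coupledChain_succ, marg1_evolve hfst],
    fun t => by rw [coupledChain_succ, marg2_evolve hsnd]⟩

end CoupledChain

lemma le_pow_of_le_sum_mul {ι : Type*} [Fintype ι] {p : ℕ → ι → ℝ} {W : ι → ι → ℝ} {ρ : ℝ}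
    (hW : ∀ i j, 0 ≤ W i j) (hρ : ∀ i, ∑ j, W i j ≤ ρ) (h₀ : ∀ i, p 0 i ≤ 1)
    (hstep : ∀ t i, p (t + 1) i ≤ ∑ j, W i j * p t j) (t : ℕ) (i : ι) : p t i ≤ ρ ^ t := by
  have hρ₀ : 0 ≤ ρ := (sum_nonneg fun j _ => hW i j).trans (hρ i)
  induction t generalizing i with
  | zero => simpa using h₀ i
  | succ t ih =>
    calc p (t + 1) i ≤ ∑ j, W i j * p t j := hstep t i
      _ ≤ ∑ j, W i j * ρ ^ t := sum_le_sum fun j _ => mul_le_mul_of_nonneg_left (ih j) (hW i j)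
      _ ≤ ρ * ρ ^ t := by rw [← sum_mul]; exact mul_le_mul_of_nonneg_right (hρ i) (pow_nonneg hρ₀ t)
      _ = ρ ^ (t + 1) := (pow_succ' ρ t).symm

lemma one_sub_pow_le_exp_neg_mul {a : ℝ} (ha : a ≤ 1) (t : ℕ) :
    (1 - a) ^ t ≤ Real.exp (-(a * t)) :=
  (pow_le_pow_left₀ (sub_nonneg.2 ha) (Real.one_sub_le_exp_neg a) t).trans_eq <| by
    rw [← Real.exp_nat_mul]; ring_nf

section Gibbs

variable {I S : Type*} [Fintype I] [DecidableEq I] [Fintype S] {π : (I → S) → ℝ}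

lemma condDist_isDist (hπ : ∀ x, 0 < π x) (i : I) (x : I → S) : IsDist (condDist π i x) := by
  have : Nonempty S := ⟨x i⟩
  have hZ : 0 < ∑ s, π (update x i s) := sum_pos (fun s _ => hπ _) univ_nonempty
  exact ⟨fun s => div_nonneg (hπ _).le hZ.le, by simp only [condDist, ← sum_div, div_self hZ.ne']⟩

lemma sum_condDist_eq (hπ : ∀ x, 0 < π x) (i : I) (x y : I → S) :
    ∑ s, condDist π i x s = ∑ s, condDist π i y s := by
  rw [(condDist_isDist hπ i x).2, (condDist_isDist hπ i y).2]

noncomputable def influence (π : (I → S) → ℝ) (i j : I) : ℝ :=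
  ⨆ p : {p : (I → S) × (I → S) // ∀ k, k ≠ j → p.1 k = p.2 k},
    tvDist (condDist π i p.1.1) (condDist π i p.1.2)

lemma tvDist_condDist_le_influence (π : (I → S) → ℝ) (i j : I) {u v : I → S}
    (h : ∀ k, k ≠ j → u k = v k) :
    tvDist (condDist π i u) (condDist π i v) ≤ influence π i j :=
  le_ciSup (f := fun p : {p : (I → S) × (I → S) // ∀ k, k ≠ j → p.1 k = p.2 k} =>
    tvDist (condDist π i p.1.1) (condDist π i p.1.2)) (Set.finite_range _).bddAbove ⟨(u, v), h⟩

lemma influence_nonneg (π : (I → S) → ℝ) (i j : I) : 0 ≤ influence π i j :=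
  Real.iSup_nonneg fun _ => tvDist_nonneg _ _

lemma sum_influence_le_totalInfluence (π : (I → S) → ℝ) (i : I) :
    ∑ j, influence π i j ≤ totalInfluence π :=
  le_ciSup (f := fun i => ∑ j, influence π i j) (Set.finite_range _).bddAbove i

lemma totalInfluence_nonneg [Nonempty I] (π : (I → S) → ℝ) : 0 ≤ totalInfluence π :=
  (sum_nonneg fun j _ => influence_nonneg π _ j).trans
    (sum_influence_le_totalInfluence π (Classical.arbitrary I))

variable [DecidableEq S]

lemma tvDist_condDist_le_sum_influence (π : (I → S) → ℝ) (i : I) (x y : I → S) :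
    tvDist (condDist π i x) (condDist π i y) ≤
      ∑ j ∈ univ.filter (fun j => x j ≠ y j), influence π i j :=
  tvDist_le_sum_of_single_site _ _ (fun j _ _ h => tvDist_condDist_le_influence π i j h) x y

/-- Resample site `k` of both configurations jointly, from the maximal coupling of their
conditional laws at `k`. -/
noncomputable def siteCoupling (π : (I → S) → ℝ) (k : I) (z z' : (I → S) × (I → S)) : ℝ :=
  ∑ p : S × S, if (update z.1 k p.1, update z.2 k p.2) = z' then
    maximalCoupling (condDist π k z.1) (condDist π k z.2) p else 0

noncomputable def gibbsCoupling (π : (I → S) → ℝ) (z z' : (I → S) × (I → S)) : ℝ :=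
  (Fintype.card I : ℝ)⁻¹ * ∑ k, siteCoupling π k z z'

lemma sum_siteCoupling (π : (I → S) → ℝ) (k : I) (z : (I → S) × (I → S))
    (s : Finset ((I → S) × (I → S))) :
    ∑ z' ∈ s, siteCoupling π k z z' = ∑ p : S × S,
      if (update z.1 k p.1, update z.2 k p.2) ∈ s then
        maximalCoupling (condDist π k z.1) (condDist π k z.2) p else 0 := by
  simp only [siteCoupling]
  rw [sum_comm]
  simp only [sum_ite_eq]

lemma siteCoupling_nonneg (hπ : ∀ x, 0 < π x) (k : I) (z z' : (I → S) × (I → S)) :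
    0 ≤ siteCoupling π k z z' :=
  sum_nonneg fun _ _ => by
    split_ifs
    exacts [maximalCoupling_nonneg (condDist_isDist hπ k _).1 (condDist_isDist hπ k _).1 _, le_rfl]

lemma sum_siteCoupling_univ (hπ : ∀ x, 0 < π x) (k : I) (z : (I → S) × (I → S)) :
    ∑ z', siteCoupling π k z z' = 1 := by
  simp only [sum_siteCoupling, mem_univ, if_true]
  rw [sum_maximalCoupling (sum_condDist_eq hπ k _ _), (condDist_isDist hπ k _).2]

lemma sum_siteCoupling_fst (hπ : ∀ x, 0 < π x) (k : I) (z : (I → S) × (I → S)) (x' : I → S) :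
    ∑ y', siteCoupling π k z (x', y') =
      ∑ s, if update z.1 k s = x' then condDist π k z.1 s else 0 := by
  simp only [siteCoupling, Prod.mk.injEq, ite_and]
  rw [sum_comm]
  simp only [sum_ite_irrel, sum_ite_eq, mem_univ, if_true, sum_const_zero, Fintype.sum_prod_type]
  refine sum_congr rfl fun s _ => ?_
  split_ifs
  exacts [sum_maximalCoupling_snd (sum_condDist_eq hπ k _ _) s, sum_const_zero]

lemma sum_siteCoupling_snd (hπ : ∀ x, 0 < π x) (k : I) (z : (I → S) × (I → S)) (y' : I → S) :
    ∑ x', siteCoupling π k z (x', y') =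
      ∑ s, if update z.2 k s = y' then condDist π k z.2 s else 0 := by
  simp only [siteCoupling, Prod.mk.injEq, ite_and]
  rw [sum_comm]
  simp only [sum_ite_eq, mem_univ, if_true, Fintype.sum_prod_type_right]
  refine sum_congr rfl fun s _ => ?_
  split_ifs
  exacts [sum_maximalCoupling_fst (sum_condDist_eq hπ k _ _) s, sum_const_zero]

lemma gibbsCoupling_nonneg (hπ : ∀ x, 0 < π x) (z z' : (I → S) × (I → S)) :
    0 ≤ gibbsCoupling π z z' :=
  mul_nonneg (by positivity) (sum_nonneg fun k _ => siteCoupling_nonneg hπ k z z')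

lemma sum_gibbsCoupling [Nonempty I] (hπ : ∀ x, 0 < π x) (z : (I → S) × (I → S)) :
    ∑ z', gibbsCoupling π z z' = 1 := by
  simp only [gibbsCoupling, ← mul_sum]
  rw [sum_comm]
  simp only [sum_siteCoupling_univ hπ, sum_const, card_univ, nsmul_eq_mul, mul_one]
  exact inv_mul_cancel₀ (Nat.cast_ne_zero.2 Fintype.card_ne_zero)

lemma sum_gibbsCoupling_fst (hπ : ∀ x, 0 < π x) (z : (I → S) × (I → S)) (x' : I → S) :
    ∑ y', gibbsCoupling π z (x', y') = gibbsKernel π z.1 x' := by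
  simp only [gibbsCoupling, gibbsKernel, ← mul_sum]
  rw [sum_comm]
  simp only [sum_siteCoupling_fst hπ, ite_agreeOff_eq_sum_update]

lemma sum_gibbsCoupling_snd (hπ : ∀ x, 0 < π x) (z : (I → S) × (I → S)) (y' : I → S) :
    ∑ x', gibbsCoupling π z (x', y') = gibbsKernel π z.2 y' := by
  simp only [gibbsCoupling, gibbsKernel, ← mul_sum]
  rw [sum_comm]
  simp only [sum_siteCoupling_snd hπ, ite_agreeOff_eq_sum_update]

noncomputable def disagreementProb (q : (I → S) × (I → S) → ℝ) (i : I) : ℝ :=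
  ∑ z ∈ univ.filter (fun z : (I → S) × (I → S) => z.1 i ≠ z.2 i), q z

lemma disagreementProb_siteCoupling_of_ne (hπ : ∀ x, 0 < π x) {i k : I} (hik : i ≠ k)
    (z : (I → S) × (I → S)) :
    disagreementProb (siteCoupling π k z) i = if z.1 i ≠ z.2 i then 1 else 0 := by
  simp only [disagreementProb, sum_siteCoupling, mem_filter, mem_univ, true_and,
    update_of_ne hik]
  by_cases h : z.1 i = z.2 i
  · simp [h]
  · simp only [ne_eq, h, not_false_eq_true, if_true]
    rw [sum_maximalCoupling (sum_condDist_eq hπ k _ _), (condDist_isDist hπ k _).2]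

lemma disagreementProb_siteCoupling_self_le (hπ : ∀ x, 0 < π x) (k : I)
    (z : (I → S) × (I → S)) :
    disagreementProb (siteCoupling π k z) k ≤ tvDist (condDist π k z.1) (condDist π k z.2) := by
  simp only [disagreementProb, sum_siteCoupling, mem_filter, mem_univ, true_and, update_self]
  rw [← sum_filter]
  exact sum_maximalCoupling_offDiag_le (sum_condDist_eq hπ k _ _)

lemma disagreementProb_gibbsCoupling_le [Nonempty I] (hπ : ∀ x, 0 < π x) (i : I)
    (z : (I → S) × (I → S)) :
    disagreementProb (gibbsCoupling π z) i ≤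
      (1 - (Fintype.card I : ℝ)⁻¹) * (if z.1 i ≠ z.2 i then 1 else 0) +
        (Fintype.card I : ℝ)⁻¹ * ∑ j ∈ univ.filter (fun j => z.1 j ≠ z.2 j), influence π i j := by
  set N := Fintype.card I
  have hN : (N : ℝ) ≠ 0 := Nat.cast_ne_zero.2 Fintype.card_ne_zero
  calc disagreementProb (gibbsCoupling π z) i
      = (N : ℝ)⁻¹ * (∑ k ∈ univ.erase i, disagreementProb (siteCoupling π k z) i +
          disagreementProb (siteCoupling π i z) i) := by
        simp only [disagreementProb, gibbsCoupling, ← mul_sum]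
        rw [sum_comm, sum_erase_add _ _ (mem_univ i)]
    _ = (N : ℝ)⁻¹ * ((N - 1) * (if z.1 i ≠ z.2 i then 1 else 0) +
          disagreementProb (siteCoupling π i z) i) := by
        rw [sum_congr rfl fun k hk =>
          disagreementProb_siteCoupling_of_ne hπ (ne_of_mem_erase hk).symm z, sum_const,
          card_erase_of_mem (mem_univ i), card_univ, nsmul_eq_mul,
          Nat.cast_sub Fintype.card_pos, Nat.cast_one]
    _ ≤ (N : ℝ)⁻¹ * ((N - 1) * (if z.1 i ≠ z.2 i then 1 else 0) +
          ∑ j ∈ univ.filter (fun j => z.1 j ≠ z.2 j), influence π i j) := by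
        gcongr
        exact (disagreementProb_siteCoupling_self_le hπ i z).trans
          (tvDist_condDist_le_sum_influence π i _ _)
    _ = _ := by rw [mul_add, ← mul_assoc, mul_sub, mul_one, inv_mul_cancel₀ hN]

lemma disagreementProb_evolve_gibbsCoupling_le [Nonempty I] (hπ : ∀ x, 0 < π x)
    {q : (I → S) × (I → S) → ℝ} (hq : ∀ z, 0 ≤ q z) (i : I) :
    disagreementProb (evolve (gibbsCoupling π) q) i ≤
      (1 - (Fintype.card I : ℝ)⁻¹) * disagreementProb q i +
        (Fintype.card I : ℝ)⁻¹ * ∑ j, influence π i j * disagreementProb q j := by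
  refine (sum_evolve_le hq (disagreementProb_gibbsCoupling_le hπ i)).trans_eq ?_
  simp only [disagreementProb, mul_add, sum_add_distrib, sum_filter, mul_sum, mul_ite, mul_one,
    mul_zero]
  rw [sum_comm (s := univ) (t := univ) (f := fun j z => _)]
  congr 1
  · exact sum_congr rfl fun _ _ => by split_ifs <;> ring
  · exact sum_congr rfl fun _ _ => sum_congr rfl fun _ _ => by split_ifs <;> ring

lemma disagreementProb_coupledChain_gibbsCoupling_le [Nonempty I] (hπ : ∀ x, 0 < π x)
    (z₀ : (I → S) × (I → S)) (t : ℕ) (i : I) :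
    disagreementProb (coupledChain (gibbsCoupling π) z₀ t) i ≤
      (1 - (Fintype.card I : ℝ)⁻¹ * (1 - totalInfluence π)) ^ t := by
  set c := (Fintype.card I : ℝ)⁻¹
  have hc₀ : 0 ≤ c := by positivity
  have hc₁ : c ≤ 1 := inv_le_one_of_one_le₀ (by exact_mod_cast Fintype.card_pos)
  have hq₀ := coupledChain_nonneg (gibbsCoupling_nonneg hπ) z₀
  refine le_pow_of_le_sum_mul (p := fun t => disagreementProb (coupledChain (gibbsCoupling π) z₀ t))
    (W := fun i j => (1 - c) * (if i = j then 1 else 0) + c * influence π i j)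
    (fun i j => ?_) (fun i => ?_) (fun i => ?_) (fun t i => ?_) t i
  · exact add_nonneg (mul_nonneg (sub_nonneg.2 hc₁) (by split_ifs <;> norm_num))
      (mul_nonneg hc₀ (influence_nonneg π i j))
  · simp only [sum_add_distrib, ← mul_sum, sum_ite_eq, mem_univ, if_true, mul_one]
    linarith [mul_le_mul_of_nonneg_left (sum_influence_le_totalInfluence π i) hc₀]
  · exact (sum_le_sum_of_subset_of_nonneg (filter_subset _ _) fun z _ _ => hq₀ 0 z).trans_eq
      (sum_coupledChain (sum_gibbsCoupling hπ) z₀ 0)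
  · simp only [coupledChain_succ]
    refine (disagreementProb_evolve_gibbsCoupling_le hπ (hq₀ t) i).trans_eq ?_
    simp only [add_mul, sum_add_distrib, ite_mul, one_mul, zero_mul, sum_ite_eq, mem_univ,
      if_true, mul_assoc, ← mul_sum]
    rfl

end Gibbs

theorem gibbs_coupling_coordinate_bound_general {n : ℕ} (hn : 0 < n)
    {S : Type*} [Fintype S] [DecidableEq S]
    (π : (Fin n → S) → ℝ) (hpos : ∀ x, 0 < π x)
    (x0 y0 : Fin n → S) :
    ∃ q : ℕ → (Fin n → S) × (Fin n → S) → ℝ,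
      IsChainCoupling (gibbsKernel π) x0 y0 q ∧
      ∀ (i : Fin n) (t : ℕ),
        ∑ z ∈ Finset.univ.filter
            (fun z : (Fin n → S) × (Fin n → S) => z.1 i ≠ z.2 i), q t z ≤
          Real.exp (-(1 - totalInfluence π) * t / n) := by
  have : Nonempty (Fin n) := ⟨⟨0, hn⟩⟩
  refine ⟨coupledChain (gibbsCoupling π) (x0, y0),
    isChainCoupling_coupledChain (gibbsCoupling_nonneg hpos) (sum_gibbsCoupling hpos)
      (sum_gibbsCoupling_fst hpos) (sum_gibbsCoupling_snd hpos) x0 y0, fun i t => ?_⟩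
  have hα : 0 ≤ totalInfluence π := totalInfluence_nonneg π
  have hrate : (n : ℝ)⁻¹ * (1 - totalInfluence π) ≤ 1 :=
    (mul_le_of_le_one_right (by positivity) (by linarith)).trans
      (inv_le_one_of_one_le₀ (by exact_mod_cast hn))
  calc disagreementProb (coupledChain (gibbsCoupling π) (x0, y0) t) i
      ≤ (1 - (n : ℝ)⁻¹ * (1 - totalInfluence π)) ^ t := by
        simpa using disagreementProb_coupledChain_gibbsCoupling_le hpos (x0, y0) t i
    _ ≤ Real.exp (-((n : ℝ)⁻¹ * (1 - totalInfluence π) * t)) := one_sub_pow_le_exp_neg_mul hrate t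
    _ = Real.exp (-(1 - totalInfluence π) * t / n) := by ring_nf

/-- for sequential Gibbs sampling on `π` with total influence `α < 1`,
from any pair of initial states there is a coupling of the chains with
`P(X_{i,t} ≠ Y_{i,t}) ≤ exp(−(1−α)t/n)` for every variable `i` and time `t`. -/
theorem gibbs_coupling_coordinate_bound {n : ℕ} (hn : 0 < n)
    {S : Type*} [Fintype S] [DecidableEq S]
    (π : (Fin n → S) → ℝ) (hπ : IsDist π) (hpos : ∀ x, 0 < π x)
    (hα : totalInfluence π < 1)
    (x0 y0 : Fin n → S) :
    ∃ q : ℕ → (Fin n → S) × (Fin n → S) → ℝ,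
      IsChainCoupling (gibbsKernel π) x0 y0 q ∧
      ∀ (i : Fin n) (t : ℕ),
        ∑ z ∈ Finset.univ.filter
            (fun z : (Fin n → S) × (Fin n → S) => z.1 i ≠ z.2 i), q t z ≤
          Real.exp (-(1 - totalInfluence π) * t / n) :=
  gibbs_coupling_coordinate_bound_general hn π hpos x0 y0
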